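/- Let e and ẽ be two energy forms in the same Hilbert space H with the same form domain H¹ := dom e = dom ẽ. If 0 ≤ δ̂ < 1 and |ẽ(f,f) − e(f,f)| ≤ δ̂ ‖f‖_e² for all f ∈ H¹, then |ẽ(f,u) − e(f,u)| ≤ δ ‖f‖_e ‖u‖_ẽ for all f, u ∈ H¹, where δ = δ̂ / √(1−δ̂). -/

import Mathlib

/-!
`b := ẽ - e` is a hermitian sesquilinear form with `|b(f,f)| ≤ δ̂ ‖f‖_e²`, and `‖·‖_e` comes from
the inner product `⟨f, g⟩_H + e(f, g)`. Polarization and the parallelogram law give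
`2 Re b(x,y) ≤ δ̂ (‖x‖_e² + ‖y‖_e²)`; testing this on `s • x` and a rotation of `y` yields a real
quadratic inequality in `s`, whose discriminant gives the Cauchy–Schwarz type bound
`|b(f,u)| ≤ δ̂ ‖f‖_e ‖u‖_e`. Finally the diagonal bound gives `(1 - δ̂) ‖u‖_e² ≤ ‖u‖_ẽ²`.
-/

open scoped ComplexConjugate

noncomputable section

/-- An energy form in `H` with form domain `D`: a densely defined, closed, non-negative,
hermitian sesquilinear form (conjugate-linear in the first argument). -/
structure EnergyFormOn (H : Type*) [NormedAddCommGroup H] [InnerProductSpace ℂ H]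
    [CompleteSpace H] (D : Submodule ℂ H) where
  dense : Dense (D : Set H)
  form : D → D → ℂ
  linear_right : ∀ f : D, IsLinearMap ℂ (form f)
  conj_symm : ∀ f g : D, form g f = conj (form f g)
  nonneg : ∀ f : D, 0 ≤ (form f f).re
  closed : ∀ f : ℕ → D,
    (∀ ε : ℝ, 0 < ε → ∃ N : ℕ, ∀ p ≥ N, ∀ q ≥ N,
        ‖((f p : H)) - (f q : H)‖ ^ 2 + (form (f p - f q) (f p - f q)).re < ε) →
    ∃ g : D, Filter.Tendsto
        (fun n => ‖((f n : H)) - (g : H)‖ ^ 2 + (form (f n - g) (f n - g)).re)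
        Filter.atTop (nhds 0)

/-- The form norm `‖f‖_e = (‖f‖² + e(f,f))^{1/2}`. -/
def EnergyFormOn.enorm {H : Type*} [NormedAddCommGroup H] [InnerProductSpace ℂ H]
    [CompleteSpace H] {D : Submodule ℂ H} (E : EnergyFormOn H D) (f : D) : ℝ :=
  Real.sqrt (‖(f : H)‖ ^ 2 + (E.form f f).re)

theorem sq_le_mul_of_forall_two_mul_le {a α β : ℝ}
    (h : ∀ s : ℝ, 2 * s * a ≤ α * s ^ 2 + β) : a ^ 2 ≤ α * β := by
  have := discrim_le_zero (a := α) (b := -2 * a) (c := β) fun s => by nlinarith [h s]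
  rw [discrim] at this
  nlinarith

namespace LinearMap

protected theorem IsSymm.sub {R M : Type*} [CommRing R] [AddCommGroup M] [Module R M]
    {I : R →+* R} {B C : M →ₛₗ[I] M →ₗ[R] R} (hB : B.IsSymm) (hC : C.IsSymm) :
    (B - C).IsSymm :=
  ⟨fun x y => by simp [hB.eq, hC.eq]⟩

variable {M : Type*} [AddCommGroup M] [Module ℂ M]

theorem apply_add_add_apply_sub (P : M →ₗ⋆[ℂ] M →ₗ[ℂ] ℂ) (x y : M) :
    P (x + y) (x + y) + P (x - y) (x - y) = 2 * (P x x + P y y) := by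
  simp only [map_add, map_sub, add_apply, sub_apply]
  ring

theorem apply_add_sub_apply_sub (B : M →ₗ⋆[ℂ] M →ₗ[ℂ] ℂ) (x y : M) :
    B (x + y) (x + y) - B (x - y) (x - y) = 2 * (B x y + B y x) := by
  simp only [map_add, map_sub, add_apply, sub_apply]
  ring

variable {B P : M →ₗ⋆[ℂ] M →ₗ[ℂ] ℂ} {δ : ℝ}

theorem IsSymm.two_mul_re_apply_le (hB : B.IsSymm) (h : ∀ x, ‖B x x‖ ≤ δ * (P x x).re)
    (x y : M) : 2 * (B x y).re ≤ δ * ((P x x).re + (P y y).re) := by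
  have hre : (B y x).re = (B x y).re := by rw [← hB.eq x y, Complex.conj_re]
  have hpol := congrArg Complex.re (B.apply_add_sub_apply_sub x y)
  have hpar := congrArg Complex.re (P.apply_add_add_apply_sub x y)
  simp only [Complex.sub_re, Complex.add_re, Complex.mul_re, Complex.re_ofNat,
    Complex.im_ofNat, zero_mul, sub_zero] at hpol hpar
  have hplus := (Complex.re_le_norm _).trans (h (x + y))
  have hminus := (neg_le_abs _).trans ((Complex.abs_re_le_norm _).trans (h (x - y)))
  linear_combination (1 / 2 : ℝ) * (hplus + hminus - hpol + δ * hpar) - hre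

theorem IsSymm.norm_apply_sq_le (hB : B.IsSymm) (h : ∀ x, ‖B x x‖ ≤ δ * (P x x).re)
    (x y : M) : ‖B x y‖ ^ 2 ≤ (δ * (P x x).re) * (δ * (P y y).re) := by
  set c : ℂ := Complex.exp (↑(-(B x y).arg) * Complex.I)
  have hc : c * conj c = 1 := by
    rw [Complex.mul_conj', Complex.norm_exp_ofReal_mul_I, Complex.ofReal_one, one_pow]
  have hcB : c * B x y = ‖B x y‖ := by
    conv_lhs => rw [← Complex.norm_mul_exp_arg_mul_I (B x y)]
    rw [mul_left_comm, ← Complex.exp_add, Complex.ofReal_neg, neg_mul, neg_add_cancel,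
      Complex.exp_zero, mul_one]
  refine sq_le_mul_of_forall_two_mul_le fun s => ?_
  have hsc := hB.two_mul_re_apply_le h ((s : ℂ) • x) (c • y)
  simp only [map_smulₛₗ₂, map_smul, smul_eq_mul, Complex.conj_ofReal] at hsc
  rw [mul_left_comm c, hcB, ← mul_assoc c, hc, one_mul, ← mul_assoc (s : ℂ),
    ← Complex.ofReal_mul, ← Complex.ofReal_mul, Complex.ofReal_re, Complex.re_ofReal_mul] at hsc
  linear_combination hsc

end LinearMap

namespace EnergyFormOn

variable {H : Type*} [NormedAddCommGroup H] [InnerProductSpace ℂ H] [CompleteSpace H]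
  {D : Submodule ℂ H} (E : EnergyFormOn H D)

theorem form_add_left (f g k : D) : E.form (f + g) k = E.form f k + E.form g k := by
  rw [E.conj_symm, (E.linear_right k).map_add, map_add, ← E.conj_symm, ← E.conj_symm]

theorem form_smul_left (c : ℂ) (f k : D) : E.form (c • f) k = conj c • E.form f k := by
  rw [E.conj_symm, (E.linear_right k).map_smul, smul_eq_mul, map_mul, ← E.conj_symm,
    smul_eq_mul]

def toSesq : D →ₗ⋆[ℂ] D →ₗ[ℂ] ℂ :=
  LinearMap.mk₂'ₛₗ _ _ E.form E.form_add_left E.form_smul_left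
    (fun f => (E.linear_right f).map_add) (fun c f => (E.linear_right f).map_smul c)

@[simp]
theorem toSesq_apply (f g : D) : E.toSesq f g = E.form f g := rfl

theorem isSymm_toSesq : E.toSesq.IsSymm := ⟨fun f g => (E.conj_symm f g).symm⟩

def formInner : D →ₗ⋆[ℂ] D →ₗ[ℂ] ℂ := (innerₛₗ ℂ).domRestrict₁₂ D D + E.toSesq

theorem enorm_nonneg (f : D) : 0 ≤ E.enorm f := Real.sqrt_nonneg _

theorem enorm_sq (f : D) : E.enorm f ^ 2 = ‖(f : H)‖ ^ 2 + (E.form f f).re :=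
  Real.sq_sqrt (add_nonneg (sq_nonneg _) (E.nonneg f))

theorem re_formInner_self (f : D) : (E.formInner f f).re = E.enorm f ^ 2 := by
  simp [formInner, enorm_sq, LinearMap.domRestrict₁₂_apply, innerₛₗ_apply_apply,
    ← Complex.ofReal_pow]

variable {E} {Et : EnergyFormOn H D} {δ : ℝ}

theorem norm_form_sub_form_le (hδ : 0 ≤ δ)
    (h : ∀ f : D, ‖Et.form f f - E.form f f‖ ≤ δ * E.enorm f ^ 2) (f u : D) :
    ‖Et.form f u - E.form f u‖ ≤ δ * E.enorm f * E.enorm u := by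
  have hsq := (Et.isSymm_toSesq.sub E.isSymm_toSesq).norm_apply_sq_le (P := E.formInner)
    (by simpa [re_formInner_self] using h) f u
  simp only [LinearMap.sub_apply, toSesq_apply, re_formInner_self] at hsq
  have hrhs : 0 ≤ δ * E.enorm f * E.enorm u :=
    mul_nonneg (mul_nonneg hδ (E.enorm_nonneg f)) (E.enorm_nonneg u)
  exact (pow_le_pow_iff_left₀ (norm_nonneg _) hrhs two_ne_zero).1 (by linear_combination hsq)

theorem sqrt_one_sub_mul_enorm_le (hδ : δ ≤ 1)
    (h : ∀ f : D, ‖Et.form f f - E.form f f‖ ≤ δ * E.enorm f ^ 2) (u : D) :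
    Real.sqrt (1 - δ) * E.enorm u ≤ Et.enorm u := by
  rw [← pow_le_pow_iff_left₀ (mul_nonneg (Real.sqrt_nonneg _) (E.enorm_nonneg u))
    (Et.enorm_nonneg u) two_ne_zero, mul_pow, Real.sq_sqrt (sub_nonneg.2 hδ), Et.enorm_sq]
  have hdiag := (neg_le_abs _).trans ((Complex.abs_re_le_norm _).trans (h u))
  rw [Complex.sub_re] at hdiag
  linear_combination hdiag + E.enorm_sq u

end EnergyFormOn

/-- Let `e` and `ẽ` be two energy forms in the same Hilbert space `H`
with the same form domain `H¹ = D`.  If `0 ≤ δ̂ < 1` and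
`|ẽ(f,f) − e(f,f)| ≤ δ̂ ‖f‖_e²` for all `f ∈ H¹`, then
`|ẽ(f,u) − e(f,u)| ≤ δ ‖f‖_e ‖u‖_ẽ` for all `f, u ∈ H¹`, where `δ = δ̂ / √(1−δ̂)`. -/
theorem form_close_offdiag_of_diag
    {H : Type*} [NormedAddCommGroup H] [InnerProductSpace ℂ H] [CompleteSpace H]
    {D : Submodule ℂ H} (E Et : EnergyFormOn H D)
    (δh : ℝ) (hδ0 : 0 ≤ δh) (hδ1 : δh < 1)
    (h : ∀ f : D, ‖Et.form f f - E.form f f‖ ≤ δh * E.enorm f ^ 2) :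
    ∀ f u : D, ‖Et.form f u - E.form f u‖ ≤
      (δh / Real.sqrt (1 - δh)) * E.enorm f * Et.enorm u := by
  intro f u
  have hs : 0 < Real.sqrt (1 - δh) := Real.sqrt_pos.2 (sub_pos.2 hδ1)
  calc ‖Et.form f u - E.form f u‖ ≤ δh * E.enorm f * E.enorm u :=
        EnergyFormOn.norm_form_sub_form_le hδ0 h f u
    _ ≤ δh * E.enorm f * (Et.enorm u / Real.sqrt (1 - δh)) := by
        gcongr
        · exact mul_nonneg hδ0 (E.enorm_nonneg f)
        · rw [le_div_iff₀' hs]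
          exact EnergyFormOn.sqrt_one_sub_mul_enorm_le hδ1.le h u
    _ = δh / Real.sqrt (1 - δh) * E.enorm f * Et.enorm u := by ring

end
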